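/- If X is a locally connected continuum, then the family S(X) ∩ N(X) of nowhere dense closed separators of X belongs to the class D_2(F_σ) as a subset of 2^X, and the family S(X) ∩ N(X) ∩ C(X) of nowhere dense subcontinua that separate X belongs to D_2(F_σ) as a subset of C(X). -/

import Mathlib

open Topology TopologicalSpace Metric Set Filter

/-- The Hilbert cube `[0,1]^ℕ` (with the product topology). -/
abbrev HCube : Type := ℕ → unitInterval

/-- The hyperspace `2^X` of nonempty compact subsets of `X`, with the Hausdorff metric. -/
abbrev Hyper (X : Type) [MetricSpace X] : Type := TopologicalSpace.NonemptyCompacts X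

/-- The hyperspace `C(X)` of subcontinua (nonempty compact connected subsets) of `X`. -/
abbrev Subcontinua (X : Type) [MetricSpace X] : Type :=
  {K : TopologicalSpace.NonemptyCompacts X // IsConnected (K : Set X)}

/-- A set is `F_σ` if it is a countable union of closed sets. -/
def IsFsigma {Z : Type} [TopologicalSpace Z] (A : Set Z) : Prop :=
  ∃ F : ℕ → Set Z, (∀ n, IsClosed (F n)) ∧ A = ⋃ n, F n

/-- A set is `F_{σδ}` if it is a countable intersection of `F_σ` sets. -/
def IsFsigmaDelta {Z : Type} [TopologicalSpace Z] (A : Set Z) : Prop :=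
  ∃ F : ℕ → Set Z, (∀ n, IsFsigma (F n)) ∧ A = ⋂ n, F n

/-- A set is in the class `D_2(F_σ)` if it is a difference of two `F_σ` sets. -/
def IsD2Fsigma {Z : Type} [TopologicalSpace Z] (A : Set Z) : Prop :=
  ∃ F G : Set Z, IsFsigma F ∧ IsFsigma G ∧ A = F \ G

/-- A set is coanalytic (`Π^1_1`) if its complement is analytic. -/
def IsCoanalytic {Z : Type} [TopologicalSpace Z] (A : Set Z) : Prop :=
  MeasureTheory.AnalyticSet Aᶜ

/-- A subset `S` of a space has finitely many connected components (as a subspace). -/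
def FinitelyManyComponents {Z : Type} [TopologicalSpace Z] (S : Set Z) : Prop :=
  {C : Set Z | ∃ x ∈ S, C = connectedComponentIn S x}.Finite

/-- A metric continuum is aposyndetic (equivalently, semi-locally connected) iff for every
`ε > 0` every point has an open neighborhood `U` of diameter `< ε` whose complement has
finitely many connected components. -/
def Aposyndetic (Z : Type) [MetricSpace Z] : Prop :=
  ∀ ε : ℝ, 0 < ε → ∀ z : Z, ∃ U : Set Z, IsOpen U ∧ z ∈ U ∧ Metric.diam U < ε ∧
    FinitelyManyComponents Uᶜ

/-- A metric continuum is colocally connected iff every point has arbitrarily small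
open neighborhoods with connected complement. -/
def ColocallyConnected (Z : Type) [MetricSpace Z] : Prop :=
  ∀ ε : ℝ, 0 < ε → ∀ z : Z, ∃ U : Set Z, IsOpen U ∧ z ∈ U ∧ Metric.diam U < ε ∧
    IsPreconnected (Uᶜ : Set Z)

/-- The family `Apo(Y)` of nondegenerate aposyndetic subcontinua of `Y`, in `C(Y)`. -/
def Apo (Y : Type) [MetricSpace Y] : Set (Subcontinua Y) :=
  {K | (K.1 : Set Y).Nontrivial ∧ Aposyndetic (K.1 : Set Y)}

/-- The family `Col(Y)` of nondegenerate colocally connected subcontinua of `Y`, in `C(Y)`. -/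
def Col (Y : Type) [MetricSpace Y] : Set (Subcontinua Y) :=
  {K | (K.1 : Set Y).Nontrivial ∧ ColocallyConnected (K.1 : Set Y)}

/-- A metric continuum `Z` is a Kelley continuum. -/
def KelleyContinuum (Z : Type) [MetricSpace Z] : Prop :=
  ∀ (z : Z) (zs : ℕ → Z), Tendsto zs atTop (nhds z) →
    ∀ W : Set Z, IsCompact W → IsConnected W → z ∈ W →
      ∃ Ws : ℕ → Set Z, (∀ n, IsCompact (Ws n) ∧ IsConnected (Ws n) ∧ zs n ∈ Ws n) ∧
        Tendsto (fun n => Metric.hausdorffDist (Ws n) W) atTop (nhds 0)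

/-- The family `K(X)` of Kelley subcontinua of `X`, in `C(X)`. -/
def KelleyFam (X : Type) [MetricSpace X] : Set (Subcontinua X) :=
  {K | KelleyContinuum (K.1 : Set X)}

/-- The family `LC(X)` of locally connected subcontinua of `X`, in `C(X)`. -/
def LCFam (X : Type) [MetricSpace X] : Set (Subcontinua X) :=
  {K | LocallyConnectedSpace (K.1 : Set X)}

/-- A subset `K` of `X` is a decomposable continuum if it is a union of two proper
subcontinua. -/
def DecomposableSet {X : Type} [TopologicalSpace X] (K : Set X) : Prop :=
  ∃ A B : Set X, IsCompact A ∧ IsConnected A ∧ IsCompact B ∧ IsConnected B ∧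
    A ∪ B = K ∧ A ≠ K ∧ B ≠ K

/-- The family `D(X)` of decomposable subcontinua of `X`, in `C(X)`. -/
def DecompFam (X : Type) [MetricSpace X] : Set (Subcontinua X) :=
  {K | DecomposableSet (K.1 : Set X)}

/-- Covering dimension at most `n`: every finite open cover has a finite open refinement
which still covers and in which every point belongs to at most `n + 1` members. -/
def CovDimLE (Z : Type) [TopologicalSpace Z] (n : ℕ) : Prop :=
  ∀ 𝒰 : Finset (Set Z), (∀ U ∈ 𝒰, IsOpen U) → ⋃₀ (𝒰 : Set (Set Z)) = Set.univ →
    ∃ 𝒱 : Finset (Set Z), (∀ V ∈ 𝒱, IsOpen V) ∧ ⋃₀ (𝒱 : Set (Set Z)) = Set.univ ∧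
      (∀ V ∈ 𝒱, ∃ U ∈ 𝒰, V ⊆ U) ∧
      ∀ z : Z, {V ∈ (𝒱 : Set (Set Z)) | z ∈ V}.ncard ≤ n + 1

/-- Covering dimension at least `n`. -/
def CovDimGE (Z : Type) [TopologicalSpace Z] (n : ℕ) : Prop :=
  ∀ m : ℕ, m + 1 ≤ n → ¬ CovDimLE Z m

/-- The family `D_n(X) ∩ C(X)` of subcontinua of covering dimension `≥ n`. -/
def DimGEFam (X : Type) [MetricSpace X] (n : ℕ) : Set (Subcontinua X) :=
  {K | CovDimGE (K.1 : Set X) n}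

/-- A closed subset `C` of a space `X` is a closed separator of `X`:
`X \ C` is a union of two disjoint nonempty open subsets of `X`. -/
def IsClosedSeparator {X : Type} [TopologicalSpace X] (C : Set X) : Prop :=
  IsClosed C ∧ ∃ U V : Set X, IsOpen U ∧ IsOpen V ∧ U.Nonempty ∧ V.Nonempty ∧
    Disjoint U V ∧ Cᶜ = U ∪ V

/-- The family `S(X)` of closed separators of `X`, viewed in the hyperspace `2^X`. -/
def SepFam (X : Type) [MetricSpace X] : Set (Hyper X) :=
  {K | IsClosedSeparator (K : Set X)}

/-- The family `S(X) ∩ C(X)` of subcontinua of `X` separating `X`, in `C(X)`. -/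
def SepSubcontFam (X : Type) [MetricSpace X] : Set (Subcontinua X) :=
  {K | IsClosedSeparator (K.1 : Set X)}

/-- The family `N(X)` of (nonempty compact) nowhere dense subsets of `X`, in `2^X`. -/
def NwdFam (X : Type) [MetricSpace X] : Set (Hyper X) :=
  {K | IsNowhereDense (K : Set X)}

/-- The family of nowhere dense subcontinua of `X`, in `C(X)`. -/
def NwdSubcontFam (X : Type) [MetricSpace X] : Set (Subcontinua X) :=
  {K | IsNowhereDense (K.1 : Set X)}

/-- A closed set `B` in a metric space `Q` (thought of as a Hilbert cube) is a `Z`-set: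
the identity can be approximated arbitrarily closely by maps missing `B`. -/
def IsZSet {Q : Type} [MetricSpace Q] (B : Set Q) : Prop :=
  IsClosed B ∧ ∀ ε : ℝ, 0 < ε → ∃ f : Q → Q, Continuous f ∧
    (∀ x : Q, f x ∉ B) ∧ ∀ x : Q, dist (f x) x < ε

/-- A `σZ`-set is a countable union of `Z`-sets. -/
def IsSigmaZSet {Q : Type} [MetricSpace Q] (B : Set Q) : Prop :=
  ∃ F : ℕ → Set Q, (∀ n, IsZSet (F n)) ∧ B = ⋃ n, F n

/-- `A ⊆ Q` is `M`-universal for the class `Cl` of subsets of the Hilbert cube: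
every `M₀ ⊆ [0,1]^ℕ` in the class is reduced to `A` by some embedding of the
Hilbert cube into `Q`. -/
def UniversalFor {Q : Type} [MetricSpace Q] (Cl : Set HCube → Prop) (A : Set Q) : Prop :=
  ∀ M : Set HCube, Cl M → ∃ f : HCube → Q, IsEmbedding f ∧ f ⁻¹' A = M

/-- `A ⊆ Q` is strongly `M`-universal for the class `Cl` of subsets of the Hilbert cube. -/
def StronglyUniversalFor {Q : Type} [MetricSpace Q] (Cl : Set HCube → Prop)
    (A : Set Q) : Prop :=
  ∀ M : Set HCube, Cl M → ∀ K : Set HCube, IsCompact K →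
    ∀ f : HCube → Q, IsEmbedding f → IsZSet (f '' K) →
      ∀ ε : ℝ, 0 < ε → ∃ g : HCube → Q, IsEmbedding g ∧
        IsZSet (Set.range g) ∧ (∀ x ∈ K, g x = f x) ∧
        g ⁻¹' A \ K = M \ K ∧ ∀ x : HCube, dist (g x) (f x) < ε

/-- `A ⊆ Q` is an absorber for the class given by `ClH` (on the Hilbert cube) and
`ClQ` (on `Q`): it belongs to the class, is contained in a `σZ`-set, and is
strongly universal for the class. -/
def IsAbsorberFor {Q : Type} [MetricSpace Q] (ClH : Set HCube → Prop)
    (ClQ : Set Q → Prop) (A : Set Q) : Prop :=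
  ClQ A ∧ (∃ B : Set Q, IsSigmaZSet B ∧ A ⊆ B) ∧ StronglyUniversalFor ClH A

/-- `C` is a closed separator of the space `Z` between `A` and `B`. -/
def SeparatesBetween {Z : Type} [TopologicalSpace Z] (C A B : Set Z) : Prop :=
  IsClosed C ∧ ∃ U V : Set Z, IsOpen U ∧ IsOpen V ∧ A ⊆ U ∧ B ⊆ V ∧
    Disjoint U V ∧ Cᶜ = U ∪ V

/-- A compact metric space is strongly infinite-dimensional if it has an essential
sequence of pairs of disjoint closed sets. -/
def StronglyInfiniteDimensional (Z : Type) [TopologicalSpace Z] : Prop :=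
  ∃ A B : ℕ → Set Z, (∀ n, IsClosed (A n) ∧ IsClosed (B n) ∧ Disjoint (A n) (B n)) ∧
    ∀ C : ℕ → Set Z, (∀ n, SeparatesBetween (C n) (A n) (B n)) → (⋂ n, C n).Nonempty

/-- The family `W_n(Y)` of weakly infinite-dimensional compacta in `Y` of covering
dimension `≥ n`, in `2^Y`. -/
def WFam (Y : Type) [MetricSpace Y] (n : ℕ) : Set (Hyper Y) :=
  {K | ¬ StronglyInfiniteDimensional (K : Set Y) ∧ CovDimGE (K : Set Y) n}

/-- A compact metric space is a `C`-space. -/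
def IsCSpace (Z : Type) [MetricSpace Z] : Prop :=
  ∀ ε : ℕ → ℝ, (∀ i, 0 < ε i) →
    ∃ (k : ℕ) (V : Fin k → Set (Set Z)),
      (∀ i : Fin k, (V i).Finite ∧ (∀ v ∈ V i, IsOpen v ∧ Metric.diam v < ε i.1) ∧
        (V i).Pairwise Disjoint) ∧
      (⋃ i : Fin k, ⋃₀ V i) = Set.univ

/-- The family `C_n(Y)` of compacta in `Y` of covering dimension `≥ n` which are
`C`-spaces, in `2^Y`. -/
def CFam (Y : Type) [MetricSpace Y] (n : ℕ) : Set (Hyper Y) :=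
  {K | IsCSpace (K : Set Y) ∧ CovDimGE (K : Set Y) n}

/-- A space is strongly countable-dimensional if it is a countable union of closed
finite-dimensional subspaces. -/
def StronglyCountableDimensional (Z : Type) [TopologicalSpace Z] : Prop :=
  ∃ F : ℕ → Set Z, (∀ k, IsClosed (F k) ∧ ∃ m : ℕ, CovDimLE (F k) m) ∧ (⋃ k, F k) = Set.univ

/-- The family `SCD_n(Y)` of strongly countable-dimensional compacta in `Y` of
covering dimension `≥ n`, in `2^Y`. -/
def SCDFam (Y : Type) [MetricSpace Y] (n : ℕ) : Set (Hyper Y) :=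
  {K | StronglyCountableDimensional (K : Set Y) ∧ CovDimGE (K : Set Y) n}

/-- A compact metric space is hereditarily infinite-dimensional if it is
infinite-dimensional and each nonempty closed subspace is infinite-dimensional or
zero-dimensional. -/
def HereditarilyInfiniteDimensional (Z : Type) [TopologicalSpace Z] : Prop :=
  (∀ m : ℕ, ¬ CovDimLE Z m) ∧
  ∀ F : Set Z, IsClosed F → F.Nonempty → (∀ m : ℕ, ¬ CovDimLE F m) ∨ CovDimLE F 0

/-- `A` is `Π^1_1`-hard: every coanalytic subset of every zero-dimensional Polish space
continuously reduces to `A`. -/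
def Pi11Hard {Z : Type} [TopologicalSpace Z] (A : Set Z) : Prop :=
  ∀ (Y₀ : Type) (_ : TopologicalSpace Y₀), PolishSpace Y₀ →
    TopologicalSpace.IsTopologicalBasis {s : Set Y₀ | IsClopen s} →
    ∀ C : Set Y₀, IsCoanalytic C → ∃ ξ : Y₀ → Z, Continuous ξ ∧ ξ ⁻¹' A = C

/-- `A` is `Π^1_1`-complete: coanalytic and `Π^1_1`-hard. -/
def Pi11Complete {Z : Type} [TopologicalSpace Z] (A : Set Z) : Prop :=
  IsCoanalytic A ∧ Pi11Hard A

/-! A compact `K` separates the locally connected space `X` iff, for some points `p, q` of a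
countable dense set and some `n`, `K` misses the `1/(n+1)`-balls around `p` and `q` and `q` is
outside the component of `p` in `Kᶜ`. For fixed `p, q, n` this condition is closed in `2^X`:
if `q` is in the component of `p` in `Kᶜ`, local connectedness puts it already in the
component of `p` in the complement of some closed `δ`-neighbourhood of `K`, which stays in the
complement of every `K'` in the `δ`-neighbourhood of `K`. So `S(X)` is `F_σ`. A closed set fails
to be nowhere dense iff it contains a member of a countable basis, so `2^X \ N(X)` is `F_σ`
too. Finally `C(X)` is a subspace of `2^X`. -/

section Fsigma

variable {Z : Type} [TopologicalSpace Z]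

theorem isFsigma_iUnion_of_isClosed {ι : Type*} [Countable ι] {F : ι → Set Z}
    (hF : ∀ i, IsClosed (F i)) : IsFsigma (⋃ i, F i) := by
  cases isEmpty_or_nonempty ι with
  | inl _ => exact ⟨fun _ => ∅, fun _ => isClosed_empty, by simp⟩
  | inr _ =>
    obtain ⟨f, hf⟩ := exists_surjective_nat ι
    exact ⟨F ∘ f, fun n => hF (f n), (hf.iUnion_comp F).symm⟩

theorem isFsigma_biUnion_of_isClosed {ι : Type*} {s : Set ι} (hs : s.Countable)
    {F : ι → Set Z} (hF : ∀ i ∈ s, IsClosed (F i)) : IsFsigma (⋃ i ∈ s, F i) := by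
  have := hs.to_subtype
  rw [biUnion_eq_iUnion]
  exact isFsigma_iUnion_of_isClosed fun i => hF i i.2

theorem IsFsigma.preimage {W : Type} [TopologicalSpace W] {f : W → Z} (hf : Continuous f)
    {A : Set Z} (hA : IsFsigma A) : IsFsigma (f ⁻¹' A) := by
  obtain ⟨F, hF, rfl⟩ := hA
  exact ⟨fun n => f ⁻¹' F n, fun n => (hF n).preimage hf, preimage_iUnion⟩

theorem IsD2Fsigma.preimage {W : Type} [TopologicalSpace W] {f : W → Z} (hf : Continuous f)
    {A : Set Z} (hA : IsD2Fsigma A) : IsD2Fsigma (f ⁻¹' A) := by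
  obtain ⟨F, G, hF, hG, rfl⟩ := hA
  exact ⟨f ⁻¹' F, f ⁻¹' G, hF.preimage hf, hG.preimage hf, preimage_sdiff f F G⟩

end Fsigma

section ConnectedComponentIn

variable {α : Type*} [TopologicalSpace α] [LocallyConnectedSpace α]

theorem IsOpen.sdiff_connectedComponentIn {U : Set α} (hU : IsOpen U) (x : α) :
    IsOpen (U \ connectedComponentIn U x) := by
  rw [isOpen_iff_forall_mem_open]
  rintro y ⟨hyU, hyx⟩
  refine ⟨connectedComponentIn U y, fun z hz => ⟨connectedComponentIn_subset U y hz, ?_⟩,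
    hU.connectedComponentIn, mem_connectedComponentIn hyU⟩
  intro hzx
  rw [connectedComponentIn_eq hzx, ← connectedComponentIn_eq hz] at hyx
  exact hyx (mem_connectedComponentIn hyU)

/-- The union `W` of the components of `x` in the `V i` is open, and so is the union of the
components in the `V i` that miss `W`; by directedness these two sets cover the component of `x`
in `⋃ i, V i`, which is therefore contained in `W`. -/
theorem connectedComponentIn_iUnion_of_directed {ι : Type*} {V : ι → Set α}
    (hV : ∀ i, IsOpen (V i)) (hdir : Directed (· ⊆ ·) V) (x : α) :
    connectedComponentIn (⋃ i, V i) x = ⋃ i, connectedComponentIn (V i) x := by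
  refine Subset.antisymm (fun y hy => ?_)
    (iUnion_subset fun i => connectedComponentIn_mono x (subset_iUnion V i))
  set W := ⋃ i, connectedComponentIn (V i) x
  set W' := ⋃ (j) (z) (_ : Disjoint (connectedComponentIn (V j) z) W),
    connectedComponentIn (V j) z
  have hW : IsOpen W := isOpen_iUnion fun i => (hV i).connectedComponentIn
  have hW' : IsOpen W' :=
    isOpen_iUnion fun j => isOpen_iUnion fun _ => isOpen_iUnion fun _ =>
      (hV j).connectedComponentIn
  have hdisj : Disjoint W W' := by
    simp only [W', disjoint_iUnion_right]
    exact fun _ _ h => h.symm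
  have hcover : connectedComponentIn (⋃ i, V i) x ⊆ W ∪ W' := by
    intro z hz
    obtain ⟨j, hzj⟩ := mem_iUnion.1 (connectedComponentIn_subset _ x hz)
    by_cases hzW : z ∈ W
    · exact Or.inl hzW
    have hzW' : Disjoint (connectedComponentIn (V j) z) W := by
      refine disjoint_iUnion_right.2 fun i => disjoint_left.2 fun w hwz hwx => ?_
      obtain ⟨k, hik, hjk⟩ := hdir i j
      have hzk := connectedComponentIn_eq (connectedComponentIn_mono z hjk hwz)
      rw [← connectedComponentIn_eq (connectedComponentIn_mono x hik hwx)] at hzk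
      exact hzW (mem_iUnion_of_mem k (hzk ▸ mem_connectedComponentIn (hjk hzj)))
    exact Or.inr (mem_iUnion_of_mem j (mem_iUnion_of_mem z
      (mem_iUnion_of_mem hzW' (mem_connectedComponentIn hzj))))
  obtain ⟨i, hxi⟩ := mem_iUnion.1 (connectedComponentIn_nonempty_iff.1 ⟨y, hy⟩)
  exact isPreconnected_connectedComponentIn.subset_left_of_subset_union hW hW' hdisj hcover
    ⟨x, mem_connectedComponentIn (mem_iUnion_of_mem i hxi),
      mem_iUnion_of_mem i (mem_connectedComponentIn hxi)⟩ hy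

end ConnectedComponentIn

theorem isClosedSeparator_of_notMem_connectedComponentIn {Z : Type} [TopologicalSpace Z]
    [LocallyConnectedSpace Z] {K : Set Z} (hK : IsClosed K) {p q : Z} (hp : p ∉ K)
    (hq : q ∉ K) (hpq : q ∉ connectedComponentIn Kᶜ p) : IsClosedSeparator K :=
  ⟨hK, connectedComponentIn Kᶜ p, Kᶜ \ connectedComponentIn Kᶜ p,
    hK.isOpen_compl.connectedComponentIn, hK.isOpen_compl.sdiff_connectedComponentIn p,
    ⟨p, mem_connectedComponentIn hp⟩, ⟨q, hq, hpq⟩, disjoint_sdiff_right,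
    (union_sdiff_cancel (connectedComponentIn_subset _ _)).symm⟩

theorem TopologicalSpace.IsTopologicalBasis.interior_eq_empty_iff {α : Type*}
    [TopologicalSpace α] {B : Set (Set α)} (hB : IsTopologicalBasis B) (hB₀ : ∅ ∉ B)
    {s : Set α} : interior s = ∅ ↔ ∀ b ∈ B, ¬ b ⊆ s := by
  constructor
  · intro hs b hb hbs
    have hb₀ : b = ∅ := subset_empty_iff.1 (hs ▸ interior_maximal hbs (hB.isOpen hb))
    exact hB₀ (hb₀ ▸ hb)
  · intro h
    by_contra hne
    obtain ⟨x, hx⟩ := nonempty_iff_ne_empty.2 hne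
    obtain ⟨b, hb, -, hbs⟩ := hB.exists_subset_of_mem_open hx isOpen_interior
    exact h b hb (hbs.trans interior_subset)

theorem TopologicalSpace.NonemptyCompacts.isClosed_setOf_superset {α : Type*}
    [TopologicalSpace α] [T1Space α] (s : Set α) :
    IsClosed {K : NonemptyCompacts α | s ⊆ K} := by
  have hs : {K : NonemptyCompacts α | s ⊆ K} =
      ⋂ x ∈ s, {K : NonemptyCompacts α | ((K : Set α) ∩ {x}).Nonempty} := by
    ext K
    simp [subset_def]
  rw [hs]
  exact isClosed_biInter fun x _ =>
    NonemptyCompacts.isClosed_inter_nonempty_of_isClosed isClosed_singleton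

section Hyperspace

variable {X : Type} [MetricSpace X]

theorem exists_pos_mem_connectedComponentIn_compl_cthickening [LocallyConnectedSpace X]
    {K : Set X} (hK : IsClosed K) {p q : X} (hq : q ∈ connectedComponentIn Kᶜ p) :
    ∃ δ > 0, q ∈ connectedComponentIn (cthickening δ K)ᶜ p := by
  have hKc : Kᶜ = ⋃ δ : Ioi (0 : ℝ), (cthickening δ K)ᶜ := by
    have h := closure_eq_iInter_cthickening K
    rw [hK.closure_eq] at h
    ext x
    conv_lhs => rw [h]
    simp
  have hdir : Directed (· ⊆ ·) fun δ : Ioi (0 : ℝ) => (cthickening δ K)ᶜ := fun δ ε =>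
    ⟨⟨min δ ε, mem_Ioi.2 (lt_min δ.2 ε.2)⟩,
      compl_subset_compl.2 (cthickening_mono (min_le_left _ _) K),
      compl_subset_compl.2 (cthickening_mono (min_le_right _ _) K)⟩
  rw [hKc, connectedComponentIn_iUnion_of_directed (fun _ => isClosed_cthickening.isOpen_compl)
    hdir] at hq
  obtain ⟨δ, hδ⟩ := mem_iUnion.1 hq
  exact ⟨δ, δ.2, hδ⟩

theorem isClosed_setOf_notMem_connectedComponentIn_compl [LocallyConnectedSpace X] (p q : X) :
    IsClosed {K : Hyper X | q ∉ connectedComponentIn (K : Set X)ᶜ p} := by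
  rw [← isOpen_compl_iff, isOpen_iff_forall_mem_open]
  intro K hK
  rw [mem_compl_iff, mem_ofPred_eq, not_not] at hK
  obtain ⟨δ, hδ, hqδ⟩ :=
    exists_pos_mem_connectedComponentIn_compl_cthickening K.isCompact.isClosed hK
  refine ⟨{K' | (K' : Set X) ⊆ thickening δ K}, fun K' hK' => ?_,
    NonemptyCompacts.isOpen_subsets_of_isOpen isOpen_thickening, self_subset_thickening hδ _⟩
  rw [mem_compl_iff, mem_ofPred_eq, not_not]
  exact connectedComponentIn_mono p
    (compl_subset_compl.2 (hK'.trans (thickening_subset_cthickening δ _))) hqδ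

def sepFamBetween (p q : X) (r : ℝ) : Set (Hyper X) :=
  {K | (K : Set X) ⊆ (ball p r ∪ ball q r)ᶜ ∧ q ∉ connectedComponentIn (K : Set X)ᶜ p}

theorem isClosed_sepFamBetween [LocallyConnectedSpace X] (p q : X) (r : ℝ) :
    IsClosed (sepFamBetween p q r) :=
  (NonemptyCompacts.isClosed_subsets_of_isClosed
    (isOpen_ball.union isOpen_ball).isClosed_compl).inter
    (isClosed_setOf_notMem_connectedComponentIn_compl p q)

theorem Dense.exists_ball_subset {D U : Set X} (hD : Dense D) (hU : IsOpen U)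
    (hne : U.Nonempty) : ∃ p ∈ D, ∃ n : ℕ, ball p (1 / (n + 1)) ⊆ U := by
  obtain ⟨p, hpD, hpU⟩ := hD.exists_mem_open hU hne
  obtain ⟨r, hr, hball⟩ := Metric.isOpen_iff.1 hU p hpU
  obtain ⟨n, hn⟩ := exists_nat_one_div_lt hr
  exact ⟨p, hpD, n, (ball_subset_ball hn.le).trans hball⟩

theorem sepFam_eq_iUnion [LocallyConnectedSpace X] {D : Set X} (hD : Dense D) :
    SepFam X = ⋃ i : D × D × ℕ, sepFamBetween (i.1 : X) (i.2.1 : X) (1 / (i.2.2 + 1)) := by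
  ext K
  simp only [mem_iUnion, Prod.exists, Subtype.exists, exists_prop]
  constructor
  · rintro ⟨-, U, V, hU, hV, hUne, hVne, hUV, hKc⟩
    obtain ⟨p, hpD, m, hpU⟩ := hD.exists_ball_subset hU hUne
    obtain ⟨q, hqD, n, hqV⟩ := hD.exists_ball_subset hV hVne
    have hcomp : connectedComponentIn (K : Set X)ᶜ p ⊆ U :=
      isPreconnected_connectedComponentIn.subset_left_of_subset_union hU hV hUV
        (hKc ▸ connectedComponentIn_subset _ p)
        ⟨p, mem_connectedComponentIn (hKc ▸ Or.inl (hpU (mem_ball_self (by positivity)))),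
          hpU (mem_ball_self (by positivity))⟩
    have hpU' : ball p (1 / ((max m n : ℕ) + 1)) ⊆ U :=
      (ball_subset_ball (by gcongr; exact_mod_cast le_max_left m n)).trans hpU
    have hqV' : ball q (1 / ((max m n : ℕ) + 1)) ⊆ V :=
      (ball_subset_ball (by gcongr; exact_mod_cast le_max_right m n)).trans hqV
    refine ⟨p, hpD, q, hqD, max m n, ?_, fun hq => disjoint_left.1 hUV (hcomp hq)
      (hqV (mem_ball_self (by positivity)))⟩
    exact subset_compl_comm.1 (hKc ▸ union_subset_union hpU' hqV')
  · rintro ⟨p, -, q, -, n, hK, hpq⟩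
    have hr : (0 : ℝ) < 1 / (n + 1) := by positivity
    exact isClosedSeparator_of_notMem_connectedComponentIn K.isCompact.isClosed
      (fun hp => hK hp (Or.inl (mem_ball_self hr)))
      (fun hq => hK hq (Or.inr (mem_ball_self hr))) hpq

theorem nwdFam_eq_compl_iUnion [SecondCountableTopology X] :
    NwdFam X = (⋃ b ∈ countableBasis X, {K : Hyper X | b ⊆ K})ᶜ := by
  ext K
  simp only [NwdFam, mem_ofPred_eq, mem_compl_iff, mem_iUnion, not_exists]
  rw [K.isCompact.isClosed.isNowhereDense_iff,
    (isBasis_countableBasis X).interior_eq_empty_iff (empty_notMem_countableBasis X)]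

end Hyperspace

theorem statement9_general (X : Type) [MetricSpace X] [CompactSpace X]
    [LocallyConnectedSpace X] :
    IsD2Fsigma (SepFam X ∩ NwdFam X) ∧
    IsD2Fsigma (SepSubcontFam X ∩ NwdSubcontFam X) := by
  obtain ⟨D, hDc, hD⟩ := exists_countable_dense X
  have := hDc.to_subtype
  have hHyper : IsD2Fsigma (SepFam X ∩ NwdFam X) :=
    ⟨_, _, isFsigma_iUnion_of_isClosed fun _ => isClosed_sepFamBetween _ _ _,
      isFsigma_biUnion_of_isClosed (countable_countableBasis X) fun b _ =>
        NonemptyCompacts.isClosed_setOf_superset b,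
      by rw [sepFam_eq_iUnion hD, nwdFam_eq_compl_iUnion, sdiff_eq]⟩
  exact ⟨hHyper, hHyper.preimage continuous_subtype_val⟩

/-- If `X` is a locally connected continuum, then the family
`S(X) ∩ N(X)` of nowhere dense closed separators of `X` is in `D_2(F_σ)` as a subset of
`2^X`, and `S(X) ∩ N(X) ∩ C(X)` is in `D_2(F_σ)` as a subset of `C(X)`. -/
theorem statement9 (X : Type) [MetricSpace X] [CompactSpace X] [ConnectedSpace X]
    [Nonempty X] [LocallyConnectedSpace X] :
    IsD2Fsigma (SepFam X ∩ NwdFam X) ∧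
    IsD2Fsigma (SepSubcontFam X ∩ NwdSubcontFam X) :=
  statement9_general X
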